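/- arXiv:2402.02403 — 3 statements merged into one kernel-verified Lean document; each statement's English description precedes it below -/
import Mathlib

section
/- For every finite connected simple graph G = (V, E), rt(G) ≤ 2 · max{ rt(G, σ) : σ is a permutation of V with σ ∘ σ = id }. In other words, the routing number of G is at most twice the maximum routing number over involutions of V. (This is the combinatorial core of the lower bound doh(G) = Ω(rt(G)).) -/
/-!
Reflecting each cycle of a permutation `π` about a chosen point gives an involution `a` with
`a π a = π⁻¹`, so `π = a * (a * π)` is a product of two involutions. Routing schedules
concatenate, hence `rt(G, a * b) ≤ rt(G, a) + rt(G, b)`. Connectivity is what makes every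
permutation routable at all (adjacent swaps generate `Perm V`); without it `rtP` would be the
junk value `sInf ∅ = 0` on unroutable permutations and subadditivity would fail.
-/

/-- A routing round on `G`: the swap permutation of a matching of `G`, i.e. an involution
of the vertices that moves vertices only along edges of `G`. -/
def isRound {V : Type*} (G : SimpleGraph V) (σ : Equiv.Perm V) : Prop :=
  σ * σ = 1 ∧ ∀ v : V, σ v ≠ v → G.Adj v (σ v)

/-- Composition, in order, of a list of round permutations: for `L = [σ₁, …, σₘ]`,
`rComp L = σₘ ∘ ⋯ ∘ σ₁`. -/
def rComp {V : Type*} (L : List (Equiv.Perm V)) : Equiv.Perm V :=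
  L.foldl (fun p σ => σ * p) 1

/-- `rt(G, π)`: the minimum number of routing rounds (matchings of `G`) whose swap
permutations, composed in order, realize the permutation `π`. -/
noncomputable def rtP {V : Type*} (G : SimpleGraph V) (π : Equiv.Perm V) : ℕ :=
  sInf {m | ∃ L : List (Equiv.Perm V), L.length = m ∧ (∀ σ ∈ L, isRound G σ) ∧ rComp L = π}

/-- `rt(G)`: the routing number of `G`, the maximum of `rt(G, π)` over all permutations. -/
noncomputable def rt {V : Type*} [Fintype V] [DecidableEq V] (G : SimpleGraph V) : ℕ :=
  Finset.univ.sup (rtP G)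

open Equiv

section OrbitReflection

variable {G X : Type*} [CommGroup G] [MulAction G X]

lemma inv_smul_eq_inv_smul_of_smul_eq {g h : G} {x : X} (hgh : g • x = h • x) :
    g⁻¹ • x = h⁻¹ • x :=
  calc g⁻¹ • x = g⁻¹ • h⁻¹ • h • x := by rw [inv_smul_smul]
    _ = g⁻¹ • h⁻¹ • g • x := by rw [hgh]
    _ = h⁻¹ • x := by rw [smul_smul, smul_smul, mul_comm g⁻¹, inv_mul_cancel_right]

/-- Once a base point `r` is chosen in each orbit, `g • r ↦ g⁻¹ • r` is well defined because
`G` is commutative. -/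
lemma exists_involutive_map_smul_eq_inv_smul :
    ∃ A : X → X, Function.Involutive A ∧ ∀ (g : G) (x : X), A (g • x) = g⁻¹ • A x := by
  let rep : X → X := fun x => (⟦x⟧ : Quotient (MulAction.orbitRel G X)).out
  have rep_smul (g : G) (x : X) : rep (g • x) = rep x :=
    congrArg Quotient.out (Quotient.sound (MulAction.mem_orbit x g))
  have rep_rep (x : X) : rep (rep x) = rep x := by
    simp only [rep, Quotient.out_eq]
  have exists_smul_rep (x : X) : ∃ g : G, g • rep x = x :=
    MulAction.mem_orbit_symm.1 (Quotient.mk_out (s := MulAction.orbitRel G X) x)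
  choose k hk using exists_smul_rep
  have spec (g : G) (x : X) (h : g • rep x = x) : (k x)⁻¹ • rep x = g⁻¹ • rep x :=
    inv_smul_eq_inv_smul_of_smul_eq ((hk x).trans h.symm)
  refine ⟨fun x => (k x)⁻¹ • rep x, fun x => ?_, fun g x => ?_⟩
  · have hrep : rep ((k x)⁻¹ • rep x) = rep x := by rw [rep_smul, rep_rep]
    dsimp only
    rw [spec (k x)⁻¹ _ (by rw [hrep]), inv_inv, hrep, hk]
  · dsimp only
    rw [spec (g * k x) _ (by rw [rep_smul, mul_smul, hk]), rep_smul, mul_inv, mul_smul]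

end OrbitReflection

open scoped IsMulCommutative in
theorem Equiv.Perm.exists_involutions_mul_eq {V : Type*} (π : Perm V) :
    ∃ a b : Perm V, a * a = 1 ∧ b * b = 1 ∧ a * b = π := by
  obtain ⟨A, hAA, hA⟩ := exists_involutive_map_smul_eq_inv_smul (G := Subgroup.zpowers π) (X := V)
  have hAπ (x : V) : A (π x) = π⁻¹ (A x) := hA ⟨π, Subgroup.mem_zpowers π⟩ x
  have ha : hAA.toPerm * hAA.toPerm = 1 := by ext x; simp [hAA x]
  refine ⟨hAA.toPerm, hAA.toPerm * π, ha, ?_, by rw [← mul_assoc, ha, one_mul]⟩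
  ext x
  simp [hAA _, hAπ]

section Routing

variable {V : Type*} {G : SimpleGraph V}

lemma rComp_eq_prod_reverse (L : List (Perm V)) : rComp L = L.reverse.prod := by
  rw [rComp, List.foldl_eq_foldr_reverse, List.prod_eq_foldr]

lemma rComp_append (L₁ L₂ : List (Perm V)) : rComp (L₁ ++ L₂) = rComp L₂ * rComp L₁ := by
  simp [rComp_eq_prod_reverse]

lemma rComp_reverse {L : List (Perm V)} (hL : ∀ σ ∈ L, σ * σ = 1) :
    rComp L.reverse = (rComp L)⁻¹ := by
  rw [rComp_eq_prod_reverse, rComp_eq_prod_reverse, List.prod_inv_reverse,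
    List.map_congr_left fun σ hσ => inv_eq_of_mul_eq_one_right (hL σ (List.mem_reverse.1 hσ)),
    List.map_id']

lemma isRound_swap [DecidableEq V] {u v : V} (h : G.Adj u v) : isRound G (swap u v) := by
  refine ⟨swap_mul_self u v, fun x hx => ?_⟩
  rcases eq_or_eq_of_swap_apply_ne_self hx with rfl | rfl
  · simpa using h
  · simpa using h.symm

variable (G) in
def routableSubgroup : Subgroup (Perm V) where
  carrier := {π | ∃ L : List (Perm V), (∀ σ ∈ L, isRound G σ) ∧ rComp L = π}
  one_mem' := ⟨[], by simp, rfl⟩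
  mul_mem' := by
    rintro _ _ ⟨L₁, h₁, rfl⟩ ⟨L₂, h₂, rfl⟩
    refine ⟨L₂ ++ L₁, fun σ hσ => ?_, rComp_append L₂ L₁⟩
    rcases List.mem_append.1 hσ with hσ | hσ
    exacts [h₂ σ hσ, h₁ σ hσ]
  inv_mem' := by
    rintro _ ⟨L, hL, rfl⟩
    exact ⟨L.reverse, fun σ hσ => hL σ (List.mem_reverse.1 hσ),
      rComp_reverse fun σ hσ => (hL σ hσ).1⟩

lemma swap_mem_routableSubgroup_of_adj [DecidableEq V] {u v : V} (h : G.Adj u v) :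
    swap u v ∈ routableSubgroup G :=
  ⟨[swap u v], by simpa using isRound_swap h, by simp [rComp_eq_prod_reverse]⟩

lemma swap_mem_routableSubgroup_of_reachable [DecidableEq V] {u v : V} (h : G.Reachable u v) :
    swap u v ∈ routableSubgroup G := by
  obtain ⟨p⟩ := h
  induction p with
  | nil => rw [swap_self]; exact one_mem _
  | @cons u w v huw p ih =>
    by_cases hvu : v = u
    · rw [hvu, swap_self]; exact one_mem _
    by_cases hvw : v = w
    · exact hvw ▸ swap_mem_routableSubgroup_of_adj huw
    have hwu := swap_mem_routableSubgroup_of_adj huw.symm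
    rw [← swap_mul_swap_mul_swap hvw hvu, swap_comm v w]
    exact mul_mem (mul_mem hwu ih) hwu

lemma routableSubgroup_eq_top [Finite V] [DecidableEq V] (hG : G.Connected) :
    routableSubgroup G = ⊤ := by
  rw [eq_top_iff, ← Perm.closure_isSwap, Subgroup.closure_le]
  rintro _ ⟨u, v, -, rfl⟩
  exact swap_mem_routableSubgroup_of_reachable (hG.preconnected u v)

lemma exists_rounds_length_eq_rtP {π : Perm V} (hπ : π ∈ routableSubgroup G) :
    ∃ L : List (Perm V), L.length = rtP G π ∧ (∀ σ ∈ L, isRound G σ) ∧ rComp L = π :=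
  let ⟨L, hL, hLπ⟩ := hπ
  Nat.sInf_mem
    (s := {m | ∃ L : List (Perm V), L.length = m ∧ (∀ σ ∈ L, isRound G σ) ∧ rComp L = π})
    ⟨L.length, L, rfl, hL, hLπ⟩

lemma rtP_mul_le {π ρ : Perm V} (hπ : π ∈ routableSubgroup G) (hρ : ρ ∈ routableSubgroup G) :
    rtP G (π * ρ) ≤ rtP G π + rtP G ρ := by
  obtain ⟨L₁, hlen₁, h₁, rfl⟩ := exists_rounds_length_eq_rtP hπ
  obtain ⟨L₂, hlen₂, h₂, rfl⟩ := exists_rounds_length_eq_rtP hρ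
  rw [← hlen₁, ← hlen₂, add_comm, ← List.length_append, ← rComp_append]
  refine Nat.sInf_le ⟨_, rfl, fun σ hσ => ?_, rfl⟩
  rcases List.mem_append.1 hσ with hσ | hσ
  exacts [h₂ σ hσ, h₁ σ hσ]

end Routing

/-- The routing number of a connected graph is at most twice the maximum routing number over
involutions of the vertex set. -/
theorem rt_le_two_mul_sup_involutions
    {V : Type*} [Fintype V] [DecidableEq V] (G : SimpleGraph V) (hG : G.Connected) :
    rt G ≤ 2 * sSup {m | ∃ σ : Equiv.Perm V, σ * σ = 1 ∧ rtP G σ = m} := by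
  set S := {m | ∃ σ : Perm V, σ * σ = 1 ∧ rtP G σ = m}
  have hbdd : BddAbove S := by
    refine (Set.finite_range (rtP G)).subset ?_ |>.bddAbove
    rintro _ ⟨σ, -, rfl⟩
    exact ⟨σ, rfl⟩
  have hall (σ : Perm V) : σ ∈ routableSubgroup G := by
    simp [routableSubgroup_eq_top hG]
  refine Finset.sup_le fun π _ => ?_
  obtain ⟨a, b, ha, hb, rfl⟩ := Perm.exists_involutions_mul_eq π
  have hsa : rtP G a ≤ sSup S := le_csSup hbdd ⟨a, ha, rfl⟩
  have hsb : rtP G b ≤ sSup S := le_csSup hbdd ⟨b, hb, rfl⟩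
  calc rtP G (a * b) ≤ rtP G a + rtP G b := rtP_mul_le (hall a) (hall b)
    _ ≤ 2 * sSup S := by omega
end

section
/- Let P_n denote the path graph on n ≥ 1 vertices (vertices 1, …, n with i adjacent to i+1 for 1 ≤ i ≤ n−1). Then rt(P_n) ≤ n; that is, every permutation of the vertices of P_n can be realized by at most n routing rounds. -/
/-!
Odd-even transposition sort: in round `t` compare the positions `j, j + 1` with `j ≡ t (mod 2)`
and swap them when they are out of order. The swaps of one round form a matching of the path, so
it suffices that `n` rounds sort the array `π`, as a sorted permutation of `Fin n` is the identity.
Comparator rounds commute with monotone maps, so by thresholding it is enough to sort arrays of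
booleans (the 0-1 principle). There the `true` with `c` further `true`s to its right starts moving
right by round `c + 1` at the latest and then moves in every round until it reaches its final
position `n - 1 - c`.
-/

lemma rComp_append_singleton {V : Type*} (L : List (Equiv.Perm V)) (σ : Equiv.Perm V) :
    rComp (L ++ [σ]) = σ * rComp L := by
  simp [rComp, List.foldl_append]

namespace OddEvenSort

/-- In round `t` the comparators join `j` and `j + 1` for every `j < n - 1` of the parity of `t`;
`IsLeft n t j` says that `j` is the left end of one of them. -/
def IsLeft (n t j : ℕ) : Prop := j % 2 = t % 2 ∧ j + 1 < n

def IsRight (n t j : ℕ) : Prop := 1 ≤ j ∧ IsLeft n t (j - 1)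

instance (n t j : ℕ) : Decidable (IsLeft n t j) := by unfold IsLeft; infer_instance

instance (n t j : ℕ) : Decidable (IsRight n t j) := by unfold IsRight; infer_instance

lemma not_isRight_of_isLeft {n t j : ℕ} (h : IsLeft n t j) : ¬ IsRight n t j := by
  unfold IsRight IsLeft at *; omega

variable {α β : Type*} [LinearOrder α] [LinearOrder β]

def step (n t : ℕ) (A : ℕ → α) (j : ℕ) : α :=
  if IsLeft n t j then min (A j) (A (j + 1))
  else if IsRight n t j then max (A (j - 1)) (A j)
  else A j

def run (n : ℕ) (A : ℕ → α) : ℕ → ℕ → α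
  | 0 => A
  | t + 1 => step n t (run n A t)

lemma comp_step_of_monotone {f : α → β} (hf : Monotone f) (n t : ℕ) (A : ℕ → α) :
    f ∘ step n t A = step n t (f ∘ A) := by
  funext j
  simp only [Function.comp, step]
  split_ifs <;> simp [hf.map_min, hf.map_max]

lemma comp_run_of_monotone {f : α → β} (hf : Monotone f) (n : ℕ) (A : ℕ → α) (t : ℕ) :
    f ∘ run n A t = run n (f ∘ A) t := by
  induction t with
  | zero => rfl
  | succ t ih => rw [run, run, ← ih, comp_step_of_monotone hf]

section Boolean

variable {n t : ℕ} {B : ℕ → Bool}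

def onesFrom (n : ℕ) (B : ℕ → Bool) (k : ℕ) : ℕ :=
  ((Finset.Ico k n).filter (B · = true)).card

lemma onesFrom_of_le {k : ℕ} (h : n ≤ k) : onesFrom n B k = 0 := by
  simp [onesFrom, Finset.Ico_eq_empty_of_le h]

lemma onesFrom_eq_succ {k : ℕ} (h : k < n) :
    onesFrom n B k = onesFrom n B (k + 1) + (B k).toNat := by
  unfold onesFrom
  rw [← Finset.insert_Ico_add_one_left_eq_Ico h, Finset.filter_insert]
  cases hb : B k
  · simp
  · simp [Finset.card_insert_of_notMem]

lemma onesFrom_le (k : ℕ) : onesFrom n B k ≤ n - k :=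
  (Finset.card_filter_le _ _).trans (Nat.card_Ico k n).le

def Settled (n : ℕ) (B : ℕ → Bool) (j : ℕ) : Prop := ∀ i, j ≤ i → i < n → B i = true

lemma settled_of_sub_le_onesFrom {k : ℕ} (h : n - k ≤ onesFrom n B k) : Settled n B k := by
  intro i hki hin
  have hcard : onesFrom n B k = (Finset.Ico k n).card := by
    rw [Nat.card_Ico]; exact le_antisymm (onesFrom_le k) h
  exact Finset.filter_card_eq hcard i (Finset.mem_Ico.mpr ⟨hki, hin⟩)

lemma Settled.step {j : ℕ} (hs : Settled n B j) : Settled n (step n t B) j := by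
  intro i hji hin
  unfold OddEvenSort.step
  split_ifs with hl hr
  · simp [hs i hji hin, hs (i + 1) (by omega) hl.2]
  · simp [hs i hji hin]
  · exact hs i hji hin

def crossing (n t : ℕ) (B : ℕ → Bool) (k : ℕ) : Bool :=
  decide (IsRight n t k) && B (k - 1) && !B k

lemma isRight_succ_iff {k : ℕ} : IsRight n t (k + 1) ↔ IsLeft n t k := by simp [IsRight]

lemma crossing_of_le {k : ℕ} (h : n ≤ k) : crossing n t B k = false := by
  have : ¬ IsRight n t k := by unfold IsRight IsLeft; omega
  simp [crossing, this]

lemma toNat_step_add_crossing (k : ℕ) : (step n t B k).toNat + (crossing n t B (k + 1)).toNat =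
    (B k).toNat + (crossing n t B k).toNat := by
  by_cases hl : IsLeft n t k
  · simp only [step, crossing, isRight_succ_iff, hl, not_isRight_of_isLeft hl,
      Nat.add_sub_cancel, decide_true, decide_false]
    cases B k <;> cases B (k + 1) <;> rfl
  · by_cases hr : IsRight n t k
    · simp only [step, crossing, isRight_succ_iff, hl, hr,
        Nat.add_sub_cancel, decide_true, decide_false]
      cases B k <;> cases B (k - 1) <;> rfl
    · simp [step, crossing, hl, hr, isRight_succ_iff]

lemma onesFrom_step (k : ℕ) :
    onesFrom n (step n t B) k = onesFrom n B k + (crossing n t B k).toNat := by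
  induction h : n - k generalizing k with
  | zero =>
    have hk : n ≤ k := by omega
    simp [onesFrom_of_le hk, crossing_of_le hk]
  | succ d ih =>
    have hk : k < n := by omega
    have := toNat_step_add_crossing (n := n) (t := t) (B := B) k
    rw [onesFrom_eq_succ hk, onesFrom_eq_succ hk, ih (k + 1) (by omega)]
    omega

lemma onesFrom_step_succ {j : ℕ} (h : IsLeft n t j → B j = true → B (j + 1) = true) :
    onesFrom n (step n t B) (j + 1) = onesFrom n B (j + 1) := by
  have : crossing n t B (j + 1) = false := by
    by_cases hl : IsLeft n t j <;> by_cases hj : B j = true <;>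
      simp_all [crossing, isRight_succ_iff]
  simp [onesFrom_step, this]

lemma Settled.of_succ {j : ℕ} (hs : Settled n B (j + 1)) (hj : B j = true) : Settled n B j := by
  intro i hji hin
  rcases hji.eq_or_lt with rfl | hlt
  · exact hj
  · exact hs i hlt hin

/-- An unsettled `true` at `j` with `c` `true`s to its right is at position at least `t - c - 1`
after `t` rounds, and from round `c + 1` on it is the left end of a comparator. -/
def OnTrack (n t : ℕ) (B : ℕ → Bool) (j : ℕ) : Prop :=
  Settled n B j ∨
    (t ≤ j + onesFrom n B (j + 1) + 1 ∧ (onesFrom n B (j + 1) < t → j % 2 = t % 2))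

def Invariant (n t : ℕ) (B : ℕ → Bool) : Prop := ∀ j < n, B j = true → OnTrack n t B j

lemma OnTrack.succ_of_parity_ne {j : ℕ} (h : OnTrack n t B j) (hpar : j % 2 ≠ t % 2) :
    OnTrack n (t + 1) B j := by
  rcases h with hs | ⟨hlag, hmove⟩
  · exact .inl hs
  · have : t ≤ onesFrom n B (j + 1) := by by_contra h; exact hpar (hmove (by omega))
    exact .inr ⟨by omega, fun _ => by omega⟩

lemma OnTrack.step {t' j : ℕ} (h : OnTrack n t' B j)
    (hc : onesFrom n (step n t B) (j + 1) = onesFrom n B (j + 1)) :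
    OnTrack n t' (step n t B) j := by
  rcases h with hs | h
  · exact .inl hs.step
  · exact .inr (hc ▸ h)

lemma onTrack_step_of_isLeft (h : Invariant n t B) {j : ℕ} (hl : IsLeft n t j)
    (hj : step n t B j = true) : OnTrack n (t + 1) (step n t B) j := by
  obtain ⟨hj0, hj1⟩ : B j = true ∧ B (j + 1) = true := by
    simpa [OddEvenSort.step, hl] using hj
  have hsucc : onesFrom n B (j + 1) = onesFrom n B (j + 1 + 1) + 1 := by
    simp [onesFrom_eq_succ hl.2, hj1]
  refine OnTrack.step ?_ (onesFrom_step_succ fun _ _ => hj1)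
  rcases h (j + 1) hl.2 hj1 with hs | ⟨hlag, hmove⟩
  · exact .inl (hs.of_succ hj0)
  · -- otherwise the `true` at `j + 1` would have to move right in round `t`, which it cannot
    have : t ≤ onesFrom n B (j + 1 + 1) := by
      by_contra hlt
      have := hmove (by omega)
      have := hl.1
      omega
    exact .inr ⟨by omega, fun _ => by omega⟩

lemma onTrack_step_of_isRight (h : Invariant n t B) {j : ℕ} (hr : IsRight n t j)
    (hBj : B j = false) (hj : step n t B j = true) : OnTrack n (t + 1) (step n t B) j := by
  have hnl : ¬ IsLeft n t j := fun hl => not_isRight_of_isLeft hl hr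
  have hprev : B (j - 1) = true := by simpa [OddEvenSort.step, hnl, hr, hBj] using hj
  obtain ⟨hj1, hpar, hjn⟩ := hr
  have hcount : onesFrom n B j = onesFrom n B (j + 1) := by
    simp [onesFrom_eq_succ (show j < n by omega), hBj]
  refine OnTrack.step ?_ (onesFrom_step_succ (absurd · hnl))
  rcases h (j - 1) (by omega) hprev with hs | ⟨hlag, -⟩
  · exact absurd (hs j (by omega) (by omega)) (by simp [hBj])
  · rw [show j - 1 + 1 = j by omega, hcount] at hlag
    exact .inr ⟨by omega, fun _ => by omega⟩

lemma invariant_step (h : Invariant n t B) : Invariant n (t + 1) (step n t B) := by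
  intro j hjn hj
  by_cases hl : IsLeft n t j
  · exact onTrack_step_of_isLeft h hl hj
  by_cases hpar : j % 2 = t % 2
  · -- `j` is the last position, and a `true` there is settled
    have hnr : ¬ IsRight n t j := by unfold IsRight IsLeft; omega
    refine .inl fun i hji hin => ?_
    obtain rfl : i = j := by unfold IsLeft at hl; omega
    simpa [OddEvenSort.step, hl, hnr] using hj
  cases hBj : B j
  · have hr : IsRight n t j := by
      by_contra hr
      simp [OddEvenSort.step, hl, hr, hBj] at hj
    exact onTrack_step_of_isRight h hr hBj hj
  · exact ((h j hjn hBj).succ_of_parity_ne hpar).step (onesFrom_step_succ (absurd · hl))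

lemma invariant_run (A : ℕ → Bool) (t : ℕ) : Invariant n t (run n A t) := by
  induction t with
  | zero => exact fun j _ _ => .inr ⟨by omega, by omega⟩
  | succ t ih => exact invariant_step ih

lemma run_succ_eq_true {A : ℕ → Bool} {j : ℕ} (hj : j + 1 < n) (hA : run n A n j = true) :
    run n A n (j + 1) = true := by
  have hs : Settled n (run n A n) j := by
    rcases invariant_run A n j (by omega) hA with hs | ⟨hlag, -⟩
    · exact hs
    · exact (settled_of_sub_le_onesFrom (by omega)).of_succ hA
  exact hs (j + 1) (by omega) hj

end Boolean

/-- The 0-1 principle: thresholding at `run n A n (j + 1)` reduces to arrays of booleans. -/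
lemma run_le_run_succ {n : ℕ} (A : ℕ → α) {j : ℕ} (hj : j + 1 < n) :
    run n A n j ≤ run n A n (j + 1) := by
  by_contra! hlt
  set c := run n A n (j + 1)
  have hf : Monotone fun x : α => decide (c < x) := fun a b hab => by
    simpa [Bool.le_iff_imp] using fun h => h.trans_le hab
  have hcomm := comp_run_of_monotone hf n A n
  have hj0 : run n ((fun x => decide (c < x)) ∘ A) n j = true := by
    rw [← hcomm]; simpa using hlt
  have hj1 := run_succ_eq_true hj hj0
  simp [← hcomm, c] at hj1

lemma monotoneOn_run {n : ℕ} (A : ℕ → α) : MonotoneOn (run n A n) (Set.Iio n) :=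
  monotoneOn_of_le_add_one Set.ordConnected_Iio fun _ _ _ hj => run_le_run_succ A hj

variable {n : ℕ}

/-- The position whose entry moves to `j` in round `t`; only misordered pairs are swapped. -/
def swapIndex (n t : ℕ) (A : ℕ → α) (j : ℕ) : ℕ :=
  if IsLeft n t j ∧ A (j + 1) < A j then j + 1
  else if IsRight n t j ∧ A j < A (j - 1) then j - 1
  else j

lemma apply_swapIndex (t : ℕ) (A : ℕ → α) (j : ℕ) :
    A (swapIndex n t A j) = step n t A j := by
  unfold swapIndex OddEvenSort.step
  by_cases hl : IsLeft n t j
  · have := not_isRight_of_isLeft hl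
    by_cases h : A (j + 1) < A j <;> simp [hl, h, this, le_of_lt, not_lt.mp]
  · by_cases hr : IsRight n t j
    · by_cases h : A j < A (j - 1) <;> simp [hl, hr, h, le_of_lt, not_lt.mp]
    · simp [hl, hr]

lemma swapIndex_lt {t : ℕ} {A : ℕ → α} {j : ℕ} (h : j < n) : swapIndex n t A j < n := by
  unfold swapIndex IsRight IsLeft
  split_ifs <;> omega

lemma swapIndex_swapIndex (t : ℕ) (A : ℕ → α) (j : ℕ) :
    swapIndex n t A (swapIndex n t A j) = j := by
  unfold swapIndex
  by_cases hl : IsLeft n t j ∧ A (j + 1) < A j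
  · have hnl : ¬ IsLeft n t (j + 1) := by unfold IsLeft at hl ⊢; omega
    simp [hl, hnl, isRight_succ_iff.mpr hl.1]
  · by_cases hr : IsRight n t j ∧ A j < A (j - 1)
    · obtain ⟨hr, hlt⟩ := hr
      have hj : j - 1 + 1 = j := by have := hr.1; omega
      simp [hl, hr, hr.2, hlt, hj]
    · simp [hl, hr]

lemma swapIndex_adj (t : ℕ) (A : ℕ → α) (j : ℕ) :
    swapIndex n t A j = j ∨ j + 1 = swapIndex n t A j ∨ swapIndex n t A j + 1 = j := by
  unfold swapIndex IsRight IsLeft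
  split_ifs <;> omega

def swapPerm (n t : ℕ) (A : ℕ → α) : Equiv.Perm (Fin n) :=
  Function.Involutive.toPerm (fun v => ⟨swapIndex n t A v, swapIndex_lt v.isLt⟩)
    fun v => Fin.ext (swapIndex_swapIndex t A v)

lemma swapPerm_inv (t : ℕ) (A : ℕ → α) : (swapPerm n t A)⁻¹ = swapPerm n t A :=
  Function.Involutive.toPerm_symm _

lemma isRound_swapPerm (t : ℕ) (A : ℕ → α) :
    isRound (SimpleGraph.pathGraph n) (swapPerm n t A) := by
  refine ⟨Equiv.ext (Function.Involutive.toPerm_involutive _), fun v hv => ?_⟩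
  have hval : (swapPerm n t A v : ℕ) = swapIndex n t A v := rfl
  have hne : swapIndex n t A v ≠ v := fun h => hv (Fin.ext h)
  rw [SimpleGraph.pathGraph_adj, hval]
  simpa [hne] using swapIndex_adj (n := n) t A v

def initial (π : Equiv.Perm (Fin n)) (j : ℕ) : ℕ := if h : j < n then π ⟨j, h⟩ else j

def rounds (π : Equiv.Perm (Fin n)) (m : ℕ) : List (Equiv.Perm (Fin n)) :=
  (List.range m).map fun t => swapPerm n t (run n (initial π) t)

lemma rComp_rounds_succ (π : Equiv.Perm (Fin n)) (t : ℕ) :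
    rComp (rounds π (t + 1)) = swapPerm n t (run n (initial π) t) * rComp (rounds π t) := by
  simp [rounds, List.range_succ, rComp_append_singleton]

lemma run_initial (π : Equiv.Perm (Fin n)) (t : ℕ) (v : Fin n) :
    run n (initial π) t v = π ((rComp (rounds π t))⁻¹ v) := by
  induction t generalizing v with
  | zero => simp [run, initial, rounds, rComp]
  | succ t ih =>
    have hv : (⟨swapIndex n t (run n (initial π) t) v, swapIndex_lt v.isLt⟩ : Fin n) =
        swapPerm n t (run n (initial π) t) v := rfl
    rw [run, ← apply_swapIndex, ← Fin.val_mk (swapIndex_lt v.isLt), ih, hv, rComp_rounds_succ,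
      mul_inv_rev, Equiv.Perm.mul_apply, swapPerm_inv]

lemma rComp_rounds (π : Equiv.Perm (Fin n)) : rComp (rounds π n) = π := by
  set σ := rComp (rounds π n)
  have hmono : Monotone (π * σ⁻¹ : Equiv.Perm (Fin n)) := fun a b hab => by
    rw [Fin.le_iff_val_le_val, Equiv.Perm.mul_apply, Equiv.Perm.mul_apply, ← run_initial,
      ← run_initial]
    exact monotoneOn_run _ a.isLt b.isLt hab
  have hid := (hmono.strictMono_of_injective (Equiv.injective _)).eq_id
  exact (mul_inv_eq_one.mp (Equiv.ext (congrFun hid))).symm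

lemma rtP_pathGraph_le (π : Equiv.Perm (Fin n)) : rtP (SimpleGraph.pathGraph n) π ≤ n := by
  refine Nat.sInf_le ⟨rounds π n, by simp [rounds], ?_, rComp_rounds π⟩
  simp only [rounds, List.mem_map]
  rintro _ ⟨t, -, rfl⟩
  exact isRound_swapPerm t _

end OddEvenSort

theorem rt_pathGraph_le_general (n : ℕ) : rt (SimpleGraph.pathGraph n) ≤ n :=
  Finset.sup_le fun π _ => OddEvenSort.rtP_pathGraph_le π

/-- The routing number of the path graph on `n ≥ 1` vertices is at most `n`. -/
theorem rt_pathGraph_le (n : ℕ) (hn : 1 ≤ n) : rt (SimpleGraph.pathGraph n) ≤ n :=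
  rt_pathGraph_le_general n
end

section
/- Let C_m denote the cycle graph on m ≥ 3 vertices. Then rt(C_m) ≤ m; that is, every permutation of the vertices of a cycle on m vertices can be realized by at most m routing rounds. -/
namespace RtCycle

variable (m : ℕ)

/-- comparator at `(q, q+1)` is active in round `t` -/
def act (t q : ℕ) : Prop := q % 2 = t % 2 ∧ q + 1 < m

instance (t q : ℕ) : Decidable (act m t q) := by unfold act; infer_instance

/-- a one at `q` moves to `q+1` during round `t` -/
def mv (t : ℕ) (b : ℕ → Bool) (q : ℕ) : Prop :=
  act m t q ∧ b q = true ∧ b (q + 1) = false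

instance (t : ℕ) (b : ℕ → Bool) (q : ℕ) : Decidable (mv m t b q) := by
  unfold mv; infer_instance

/-- the parallel compare-exchange round on boolean states -/
def bstep (t : ℕ) (b : ℕ → Bool) (q : ℕ) : Bool :=
  if act m t q then (b q && b (q + 1))
  else if 1 ≤ q ∧ act m t (q - 1) then (b (q - 1) || b q)
  else b q

lemma bstep_char (t : ℕ) (b : ℕ → Bool) (q : ℕ) :
    bstep m t b q = true ↔
      ((b q = true ∧ ¬ mv m t b q) ∨ (1 ≤ q ∧ mv m t b (q - 1))) := by
  unfold bstep
  by_cases h : act m t q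
  · have h2 : ¬ (1 ≤ q ∧ act m t (q - 1)) := by
      rintro ⟨hq, h3, -⟩
      obtain ⟨h1, -⟩ := h
      omega
    have h2' : ¬ (1 ≤ q ∧ mv m t b (q - 1)) := fun hx => h2 ⟨hx.1, hx.2.1⟩
    cases hb : b q <;> cases hc : b (q + 1) <;>
      simp [h, h2', mv, hb, hc] <;>
      exact fun hq ha _ => absurd ⟨hq, ha⟩ h2
  · by_cases h2 : 1 ≤ q ∧ act m t (q - 1)
    · have hx : q - 1 + 1 = q := by omega
      have hmq : ¬ mv m t b q := fun hx => h hx.1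
      cases hb : b q <;> cases hc : b (q - 1) <;>
        simp [h, h2, hmq, mv, hb, hc, hx, h2.1, h2.2]
    · have hmq : ¬ mv m t b q := fun hx => h hx.1
      have h2' : ¬ (1 ≤ q ∧ mv m t b (q - 1)) := fun hx => h2 ⟨hx.1, hx.2.1⟩
      simp [h, h2, hmq, h2']

/-- number of ones in `[v, m)` -/
def cnt (b : ℕ → Bool) (v : ℕ) : ℕ :=
  ((Finset.Ico v m).filter (fun j => b j = true)).card

lemma cnt_of_le {b : ℕ → Bool} {v : ℕ} (h : m ≤ v) : cnt m b v = 0 := by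
  unfold cnt
  rw [Finset.Ico_eq_empty (by omega)]
  simp

lemma cnt_succ (b : ℕ → Bool) {v : ℕ} (h : v < m) :
    cnt m b v = (if b v = true then 1 else 0) + cnt m b (v + 1) := by
  unfold cnt
  rw [Finset.card_filter, Finset.card_filter, Finset.sum_eq_sum_Ico_succ_bot h]

lemma cnt_le {b : ℕ → Bool} (v : ℕ) : cnt m b v ≤ m - v := by
  unfold cnt
  calc ((Finset.Ico v m).filter (fun j => b j = true)).card
      ≤ (Finset.Ico v m).card := Finset.card_filter_le _ _
    _ = m - v := Nat.card_Ico v m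

lemma cnt_zero_le (b : ℕ → Bool) : ∀ v, cnt m b 0 ≤ v + cnt m b v := by
  intro v
  induction v with
  | zero => omega
  | succ v ih =>
    by_cases h : v < m
    · rw [cnt_succ m b h] at ih
      by_cases hb : b v = true <;> simp [hb] at ih <;> omega
    · have h0 := cnt_le m (b := b) 0
      have h1 : cnt m b (v+1) = 0 := cnt_of_le m (by omega)
      omega

/-- `idx b p` : (1-based) index from the right of the one sitting at `p`. -/
def idx (b : ℕ → Bool) (p : ℕ) : ℕ := 1 + cnt m b (p + 1)

lemma cnt_eq_idx {b : ℕ → Bool} {p : ℕ} (hp : p < m) (hb : b p = true) :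
    cnt m b p = idx m b p := by
  rw [cnt_succ m b hp, idx, hb]
  simp

lemma idx_ub {b : ℕ → Bool} {p : ℕ} (hp : p < m) (hb : b p = true) :
    p + idx m b p ≤ m := by
  have h1 := cnt_eq_idx m hp hb
  have h2 := cnt_le m (b := b) p
  omega

lemma idx_lb {b : ℕ → Bool} {p : ℕ} (hp : p < m) (hb : b p = true) :
    cnt m b 0 ≤ p + idx m b p := by
  have := cnt_zero_le m b (p + 1)
  unfold idx
  omega

lemma idx_le_k {b : ℕ → Bool} {p : ℕ} (hp : p < m) (hb : b p = true) :
    idx m b p ≤ cnt m b 0 := by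
  rw [← cnt_eq_idx m hp hb]
  have := cnt_zero_le m b p
  unfold cnt
  apply Finset.card_le_card
  apply Finset.filter_subset_filter
  apply Finset.Ico_subset_Ico <;> omega

end RtCycle

namespace RtCycle

variable (m : ℕ)

lemma mv_not_succ {t : ℕ} {b : ℕ → Bool} {q : ℕ} (h : mv m t b q) :
    ¬ mv m t b (q + 1) := by
  rintro ⟨ha, -⟩
  have h1 : (q + 1) % 2 = t % 2 := ha.1
  have h2 : q % 2 = t % 2 := h.1.1
  omega

lemma key_id (t : ℕ) (b : ℕ → Bool) (v : ℕ) :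
    (if bstep m t b v = true then 1 else 0) + (if mv m t b v then 1 else 0)
      = (if b v = true then 1 else 0) + (if 1 ≤ v ∧ mv m t b (v - 1) then 1 else 0) := by
  have hchar := bstep_char m t b v
  by_cases h1 : mv m t b v
  · have hb : b v = true := h1.2.1
    have h2 : ¬ (1 ≤ v ∧ mv m t b (v - 1)) := by
      rintro ⟨hq, hm⟩
      have e : v - 1 + 1 = v := by omega
      have := mv_not_succ m hm
      rw [e] at this
      exact this h1
    have h3 : bstep m t b v = false := by
      rw [← Bool.not_eq_true, bstep_char]
      rintro (⟨-, hn⟩ | hn)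
      · exact hn h1
      · exact h2 hn
    simp [h1, h2, h3, hb]
  · by_cases h2 : 1 ≤ v ∧ mv m t b (v - 1)
    · have hb : b v = false := by
        have e : v - 1 + 1 = v := by omega
        have := h2.2.2.2
        rwa [e] at this
      have h3 : bstep m t b v = true := by
        rw [bstep_char]
        exact Or.inr h2
      simp [h1, h2, h3, hb]
    · have h3 : bstep m t b v = b v := by
        cases hb : b v
        · rw [← Bool.not_eq_true] at hb ⊢
          rw [bstep_char]
          rintro (⟨hc, -⟩ | hc)
          · exact hb hc
          · exact h2 hc
        · rw [bstep_char]
          exact Or.inl ⟨hb, h1⟩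
      simp [h1, h2, h3]

lemma cnt_bstep_aux (t : ℕ) (b : ℕ → Bool) :
    ∀ d v, m ≤ v + d →
      cnt m (bstep m t b) v
        = cnt m b v + (if 1 ≤ v ∧ mv m t b (v - 1) then 1 else 0) := by
  intro d
  induction d with
  | zero =>
    intro v hv
    have h1 : cnt m (bstep m t b) v = 0 := cnt_of_le m (by omega)
    have h2 : cnt m b v = 0 := cnt_of_le m (by omega)
    have h3 : ¬ (1 ≤ v ∧ mv m t b (v - 1)) := by
      rintro ⟨hq, hm⟩
      have : v - 1 + 1 < m := hm.1.2
      omega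
    simp [h1, h2, h3]
  | succ d ih =>
    intro v hv
    by_cases hvm : m ≤ v
    · have h1 : cnt m (bstep m t b) v = 0 := cnt_of_le m hvm
      have h2 : cnt m b v = 0 := cnt_of_le m hvm
      have h3 : ¬ (1 ≤ v ∧ mv m t b (v - 1)) := by
        rintro ⟨hq, hm⟩
        have : v - 1 + 1 < m := hm.1.2
        omega
      simp [h1, h2, h3]
    · push_neg at hvm
      have e1 := cnt_succ m (bstep m t b) hvm
      have e2 := cnt_succ m b hvm
      have e3 := ih (v + 1) (by omega)
      have e4 : (if 1 ≤ v + 1 ∧ mv m t b (v + 1 - 1) then 1 else 0)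
          = (if mv m t b v then 1 else 0) := by
        simp
      have e5 := key_id m t b v
      omega

lemma cnt_bstep (t : ℕ) (b : ℕ → Bool) (v : ℕ) :
    cnt m (bstep m t b) v
      = cnt m b v + (if 1 ≤ v ∧ mv m t b (v - 1) then 1 else 0) :=
  cnt_bstep_aux m t b m v (by omega)

lemma cnt_bstep_zero (t : ℕ) (b : ℕ → Bool) :
    cnt m (bstep m t b) 0 = cnt m b 0 := by
  rw [cnt_bstep]
  simp

end RtCycle

namespace RtCycle

variable (m : ℕ)

/-- The key inductive invariant of odd-even transposition sort. -/
def Inv (t : ℕ) (b : ℕ → Bool) : Prop :=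
  ∀ p, p < m → b p = true →
    t < idx m b p ∨ p + idx m b p = m ∨
      (p % 2 = t % 2 ∧ cnt m b 0 + t ≤ p + 2 * idx m b p ∧
        (p + 1 < m → b (p + 1) = false))

lemma inv_zero (b : ℕ → Bool) : Inv m 0 b := by
  intro p _ _
  left
  unfold idx
  omega

lemma idx_ge_one (b : ℕ → Bool) (p : ℕ) : 1 ≤ idx m b p := by
  unfold idx; omega

lemma idx_split {b : ℕ → Bool} {q : ℕ} (hq1m : q + 1 < m) (hbq1 : b (q + 1) = true) :
    idx m b q = 1 + idx m b (q + 1) := by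
  unfold idx
  rw [cnt_succ m b hq1m, hbq1]
  simp

lemma inv_step {t : ℕ} {b : ℕ → Bool} (hInv : Inv m t b) :
    Inv m (t + 1) (bstep m t b) := by
  intro q hq hbq
  have hk : cnt m (bstep m t b) 0 = cnt m b 0 := cnt_bstep_zero m t b
  have hidxq' : ∀ r, idx m (bstep m t b) r
      = idx m b r + (if mv m t b r then 1 else 0) := by
    intro r
    unfold idx
    rw [cnt_bstep]
    have e : (if 1 ≤ r + 1 ∧ mv m t b (r + 1 - 1) then 1 else 0)
        = (if mv m t b r then 1 else 0) := by simp
    omega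
  rcases (bstep_char m t b q).mp hbq with ⟨hbqb, hnmv⟩ | ⟨hq1, hmv⟩
  · -- Case B : the one at q did not move
    have hi'q : idx m (bstep m t b) q = idx m b q := by
      rw [hidxq' q, if_neg hnmv]
      omega
    by_cases hti : t + 1 < idx m b q
    · left; omega
    · rcases hInv q hq hbqb with h1 | h2 | h3
      · -- t < idx b q, so idx b q = t + 1
        by_cases hpar : q % 2 = t % 2
        · -- wrong phase: must be blocked or at boundary
          by_cases hq1m : q + 1 < m
          · have hbq1 : b (q + 1) = true := by
              by_contra hne
              rw [Bool.not_eq_true] at hne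
              exact hnmv ⟨⟨hpar, hq1m⟩, hbqb, hne⟩
            have hQ := idx_split m hq1m hbq1
            have hone := idx_ge_one m b (q + 1)
            rcases hInv (q + 1) hq1m hbq1 with g1 | g2 | g3
            · omega
            · right; left; omega
            · exact absurd g3.1 (by omega)
          · have hub := idx_ub m hq hbqb
            have hone := idx_ge_one m b q
            right; left; omega
        · -- correct phase at t+1
          by_cases hqim : q + idx m b q = m
          · right; left; omega
          · right; right
            have hlb := idx_lb m hq hbqb
            refine ⟨by omega, by omega, ?_⟩
            intro hq1m
            by_contra hne
            rw [Bool.not_eq_false] at hne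
            rcases (bstep_char m t b (q + 1)).mp hne with ⟨hbq1b, hnm1⟩ | ⟨-, hmv2⟩
            · have hQ := idx_split m hq1m hbq1b
              have hone := idx_ge_one m b (q + 1)
              rcases hInv (q + 1) hq1m hbq1b with g1 | g2 | g3
              · omega
              · omega
              · obtain ⟨gp, gb, gg⟩ := g3
                by_cases hq2m : q + 2 < m
                · exact hnm1 ⟨⟨by omega, hq2m⟩, hbq1b, gg hq2m⟩
                · have hub1 := idx_ub m hq1m hbq1b
                  omega
            · have e : q + 1 - 1 = q := by omega
              rw [e] at hmv2
              exact hnmv hmv2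
      · right; left; omega
      · obtain ⟨hpar, hbound, hgap⟩ := h3
        by_cases hq1m : q + 1 < m
        · exact absurd ⟨⟨hpar, hq1m⟩, hbqb, hgap hq1m⟩ hnmv
        · have hub := idx_ub m hq hbqb
          have hone := idx_ge_one m b q
          right; left; omega
  · -- Case A : the one arrived at q from q-1
    have hp : q - 1 + 1 = q := by omega
    have hact : act m t (q - 1) := hmv.1
    have hpar : (q - 1) % 2 = t % 2 := hact.1
    have hbp : b (q - 1) = true := hmv.2.1
    have hbq0 : b q = false := by
      have := hmv.2.2
      rwa [hp] at this
    have hnmvq : ¬ mv m t b q := by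
      rintro ⟨ha, -⟩
      have : q % 2 = t % 2 := ha.1
      omega
    have hi'q : idx m (bstep m t b) q = idx m b q := by
      rw [hidxq' q, if_neg hnmvq]
      omega
    -- idx at q-1 equals idx at q since b q = false
    have hik : idx m b (q - 1) = idx m b q := by
      unfold idx
      rw [hp, cnt_succ m b hq, hbq0]
      simp
    have hub' : q + idx m (bstep m t b) q ≤ m := idx_ub m hq hbq
    by_cases hti : t + 1 < idx m b q
    · left; omega
    · -- establish the bound  k + t ≤ (q-1) + 2 * idx
      have hbound : cnt m b 0 + t ≤ (q - 1) + 2 * idx m b q := by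
        rcases hInv (q - 1) (by omega) hbp with h1 | h2 | h3
        · have hlb := idx_lb m (p := q - 1) (by omega) hbp
          omega
        · omega
        · have := h3.2.1
          omega
      by_cases hqim : q + idx m b q = m
      · right; left; omega
      · right; right
        refine ⟨by omega, by omega, ?_⟩
        intro hq1m
        by_contra hne
        rw [Bool.not_eq_false] at hne
        rcases (bstep_char m t b (q + 1)).mp hne with ⟨hbq1b, hnm1⟩ | ⟨-, hmv2⟩
        · have hQ := idx_split m hq1m hbq1b
          have hone := idx_ge_one m b (q + 1)
          rcases hInv (q + 1) hq1m hbq1b with g1 | g2 | g3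
          · omega
          · omega
          · obtain ⟨gp, gb, gg⟩ := g3
            by_cases hq2m : q + 2 < m
            · exact hnm1 ⟨⟨by omega, hq2m⟩, hbq1b, gg hq2m⟩
            · have hub1 := idx_ub m hq1m hbq1b
              omega
        · have e : q + 1 - 1 = q := by omega
          rw [e] at hmv2
          exact hnmvq hmv2

end RtCycle

namespace RtCycle

variable (m : ℕ)

lemma inv_final {b : ℕ → Bool} (h : Inv m m b) {p : ℕ} (hp : p + 1 < m)
    (hb : b p = true) : b (p + 1) = true := by
  have hub : p + idx m b p ≤ m := idx_ub m (by omega) hb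
  have hkle : idx m b p ≤ cnt m b 0 := idx_le_k m (by omega) hb
  have hkm : cnt m b 0 ≤ m := by
    have := cnt_le m (b := b) 0
    omega
  -- in every case we get p + idx = m, i.e. the whole suffix [p, m) is ones
  have hsuffix : p + idx m b p = m → b (p + 1) = true := by
    intro he
    have hc : cnt m b p = (Finset.Ico p m).card := by
      rw [cnt_eq_idx m (by omega) hb, Nat.card_Ico]
      omega
    have := Finset.filter_card_eq hc (p + 1) (by
      rw [Finset.mem_Ico]; omega)
    simpa using this
  rcases h p (by omega) hb with h1 | h2 | h3
  · omega
  · exact hsuffix h2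
  · obtain ⟨-, hbound, -⟩ := h3
    exact hsuffix (by omega)

end RtCycle

namespace RtCycle

variable (m : ℕ)

/-- comparator `(q, q+1)` actually swaps (values out of order) -/
def gact (t : ℕ) (g : ℕ → ℕ) (q : ℕ) : Prop := act m t q ∧ g (q + 1) < g q

instance (t : ℕ) (g : ℕ → ℕ) (q : ℕ) : Decidable (gact m t g q) := by
  unfold gact; infer_instance

/-- the position permutation performed during round `t` -/
def tau (t : ℕ) (g : ℕ → ℕ) (q : ℕ) : ℕ :=
  if gact m t g q then q + 1
  else if 1 ≤ q ∧ gact m t g (q - 1) then q - 1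
  else q

/-- one round of parallel compare-exchange on ℕ-valued states -/
def gstep (t : ℕ) (g : ℕ → ℕ) : ℕ → ℕ := fun q => g (tau m t g q)

lemma gact_not_succ {t : ℕ} {g : ℕ → ℕ} {q : ℕ} (h : gact m t g q) :
    ¬ gact m t g (q + 1) := by
  rintro ⟨ha, -⟩
  have h1 : (q + 1) % 2 = t % 2 := ha.1
  have h2 : q % 2 = t % 2 := h.1.1
  omega

lemma tau_involutive (t : ℕ) (g : ℕ → ℕ) : Function.Involutive (tau m t g) := by
  intro q
  unfold tau
  by_cases h1 : gact m t g q
  · rw [if_pos h1, if_neg (gact_not_succ m h1), if_pos ⟨by omega, by simpa using h1⟩]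
    omega
  · by_cases h2 : 1 ≤ q ∧ gact m t g (q - 1)
    · rw [if_neg h1, if_pos h2, if_pos h2.2]
      omega
    · rw [if_neg h1, if_neg h2, if_neg h1, if_neg h2]

lemma tau_lt (t : ℕ) (g : ℕ → ℕ) {q : ℕ} (hq : q < m) : tau m t g q < m := by
  unfold tau
  by_cases h1 : gact m t g q
  · rw [if_pos h1]
    exact h1.1.2
  · rw [if_neg h1]
    by_cases h2 : 1 ≤ q ∧ gact m t g (q - 1)
    · rw [if_pos h2]; omega
    · rw [if_neg h2]; exact hq

lemma tau_ge (t : ℕ) (g : ℕ → ℕ) {q : ℕ} (hq : m ≤ q) : tau m t g q = q := by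
  unfold tau
  have h1 : ¬ gact m t g q := by
    rintro ⟨⟨-, h⟩, -⟩; omega
  have h2 : ¬ (1 ≤ q ∧ gact m t g (q - 1)) := by
    rintro ⟨hx, ⟨⟨-, h⟩, -⟩⟩; omega
  rw [if_neg h1, if_neg h2]

/-- threshold function -/
def thr (c : ℕ) (g : ℕ → ℕ) : ℕ → Bool := fun q => decide (c ≤ g q)

/-- the bridge: thresholding commutes with a round -/
lemma thr_gstep (c t : ℕ) (g : ℕ → ℕ) :
    thr c (gstep m t g) = bstep m t (thr c g) := by
  funext q
  unfold thr gstep tau bstep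
  by_cases h : act m t q
  · have h2' : ¬ (1 ≤ q ∧ gact m t g (q - 1)) := by
      rintro ⟨hx, ha⟩
      have h3 : (q - 1) % 2 = t % 2 := ha.1.1
      have h4 : q % 2 = t % 2 := h.1
      omega
    rw [if_pos h]
    by_cases hsw : g (q + 1) < g q
    · rw [if_pos ⟨h, hsw⟩]
      by_cases hc : c ≤ g (q + 1)
      · have hc2 : c ≤ g q := by omega
        simp [hc, hc2]
      · simp [hc]
    · have hng : ¬ gact m t g q := fun hg => hsw hg.2
      rw [if_neg hng, if_neg h2']
      by_cases hc : c ≤ g q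
      · have hc2 : c ≤ g (q + 1) := by omega
        simp [hc, hc2]
      · simp [hc]
  · have hng : ¬ gact m t g q := fun hg => h hg.1
    rw [if_neg hng, if_neg h]
    by_cases h2 : 1 ≤ q ∧ act m t (q - 1)
    · have hp : q - 1 + 1 = q := by omega
      rw [if_pos h2]
      by_cases hsw : g q < g (q - 1)
      · have hga : gact m t g (q - 1) := ⟨h2.2, by rw [hp]; exact hsw⟩
        rw [if_pos ⟨h2.1, hga⟩]
        by_cases hc : c ≤ g (q - 1)
        · simp [hc]
        · have hc2 : ¬ c ≤ g q := by omega
          simp [hc, hc2]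
      · have hng2 : ¬ (1 ≤ q ∧ gact m t g (q - 1)) := by
          rintro ⟨-, ⟨-, hlt⟩⟩
          rw [hp] at hlt
          exact hsw hlt
        rw [if_neg hng2]
        by_cases hc : c ≤ g (q - 1)
        · have hc2 : c ≤ g q := by omega
          simp [hc, hc2]
        · simp [hc]
    · have hng2 : ¬ (1 ≤ q ∧ gact m t g (q - 1)) := by
        rintro ⟨hx, hga⟩
        exact h2 ⟨hx, hga.1⟩
      rw [if_neg hng2, if_neg h2]

end RtCycle

namespace RtCycle

variable (m : ℕ)

/-- iterate the rounds starting from `g0` -/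
def gseq (g0 : ℕ → ℕ) : ℕ → (ℕ → ℕ)
  | 0 => g0
  | t + 1 => gstep m t (gseq g0 t)

lemma inv_gseq (g0 : ℕ → ℕ) (c : ℕ) : ∀ t, Inv m t (thr c (gseq m g0 t))
  | 0 => inv_zero m _
  | t + 1 => by
    show Inv m (t + 1) (thr c (gstep m t (gseq m g0 t)))
    rw [thr_gstep]
    exact inv_step m (inv_gseq g0 c t)

lemma gseq_inj (g0 : ℕ → ℕ) (h : Function.Injective g0) :
    ∀ t, Function.Injective (gseq m g0 t)
  | 0 => h
  | t + 1 => (gseq_inj g0 h t).comp ((tau_involutive m t _).injective)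

lemma gseq_lt (g0 : ℕ → ℕ) (h0 : ∀ j, j < m → g0 j < m) :
    ∀ t, ∀ j, j < m → gseq m g0 t j < m
  | 0 => h0
  | t + 1 => fun j hj => gseq_lt g0 h0 t _ (tau_lt m t _ hj)

lemma gseq_mono (g0 : ℕ → ℕ) (hinj : Function.Injective g0) {p : ℕ}
    (hp : p + 1 < m) : gseq m g0 m p < gseq m g0 m (p + 1) := by
  have hle : gseq m g0 m p ≤ gseq m g0 m (p + 1) := by
    by_contra hlt
    push_neg at hlt
    have hb : thr (gseq m g0 m p) (gseq m g0 m) p = true := by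
      simp [thr]
    have h2 := inv_final m (inv_gseq m g0 (gseq m g0 m p) m) hp hb
    simp only [thr, decide_eq_true_eq] at h2
    omega
  have hne : gseq m g0 m p ≠ gseq m g0 m (p + 1) := by
    intro he
    have := gseq_inj m g0 hinj m he
    omega
  omega

lemma gseq_id (g0 : ℕ → ℕ) (hinj : Function.Injective g0)
    (h0 : ∀ j, j < m → g0 j < m) : ∀ j, j < m → gseq m g0 m j = j := by
  have hlow : ∀ j, j < m → j ≤ gseq m g0 m j := by
    intro j
    induction j with
    | zero => intro _; exact Nat.zero_le _
    | succ j ih =>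
      intro hj
      have h1 := ih (by omega)
      have h2 := gseq_mono m g0 hinj hj
      omega
  have hupp : ∀ d j, j < m → m ≤ j + d + 1 → gseq m g0 m j = j := by
    intro d
    induction d with
    | zero =>
      intro j hj hd
      have h1 := gseq_lt m g0 h0 m j hj
      have h2 := hlow j hj
      omega
    | succ d ih =>
      intro j hj hd
      by_cases hj1 : j + 1 < m
      · have he := ih (j + 1) hj1 (by omega)
        have h2 := gseq_mono m g0 hinj hj1
        have h3 := hlow j hj
        omega
      · have h1 := gseq_lt m g0 h0 m j hj
        have h2 := hlow j hj
        omega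
  intro j hj
  exact hupp m j hj (by omega)

end RtCycle

namespace RtCycle

/-- the round permutation on `Fin m` -/
def rho (m t : ℕ) (g : ℕ → ℕ) : Equiv.Perm (Fin m) :=
  Function.Involutive.toPerm
    (fun x => ⟨tau m t g x.val, tau_lt m t g x.isLt⟩)
    (fun x => Fin.ext (tau_involutive m t g x.val))

lemma rho_apply (m t : ℕ) (g : ℕ → ℕ) (x : Fin m) :
    (rho m t g x : ℕ) = tau m t g x.val := rfl

lemma rho_invol (m t : ℕ) (g : ℕ → ℕ) (x : Fin m) :
    rho m t g (rho m t g x) = x :=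
  Fin.ext (tau_involutive m t g x.val)

lemma adj_consec {m : ℕ} (hm : 3 ≤ m) {q : ℕ} (h : q + 1 < m) :
    (SimpleGraph.cycleGraph m).Adj ⟨q, by omega⟩ ⟨q + 1, h⟩ := by
  rw [SimpleGraph.cycleGraph_adj']
  right
  rw [Fin.sub_def]
  simp only [Fin.val_mk]
  have e1 : m - q + (q + 1) = m + 1 := by omega
  rw [e1, Nat.add_mod_left]
  exact Nat.mod_eq_of_lt (by omega)

lemma isRound_rho {m : ℕ} (hm : 3 ≤ m) (t : ℕ) (g : ℕ → ℕ) :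
    isRound (SimpleGraph.cycleGraph m) (rho m t g) := by
  constructor
  · apply Equiv.ext
    intro x
    rw [Equiv.Perm.mul_apply, rho_invol]
    rfl
  · intro v hv
    have hne : tau m t g v.val ≠ v.val := by
      intro he
      exact hv (Fin.ext (by rw [rho_apply, he]))
    by_cases h1 : gact m t g v.val
    · have he : rho m t g v = ⟨v.val + 1, h1.1.2⟩ := by
        apply Fin.ext
        rw [rho_apply]
        unfold tau
        rw [if_pos h1]
      rw [he]
      exact adj_consec hm h1.1.2
    · by_cases h2 : 1 ≤ v.val ∧ gact m t g (v.val - 1)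
      · have hlt : (v.val - 1) + 1 < m := by
          have := h2.2.1.2
          omega
        have he : rho m t g v = ⟨v.val - 1, by omega⟩ := by
          apply Fin.ext
          rw [rho_apply]
          unfold tau
          rw [if_neg h1, if_pos h2]
        rw [he]
        have hv' : (⟨(v.val - 1) + 1, hlt⟩ : Fin m) = v := by
          apply Fin.ext
          simp only [Fin.val_mk]
          omega
        have hadj := (adj_consec hm hlt).symm
        rw [hv'] at hadj
        exact hadj
      · exfalso
        apply hne
        unfold tau
        rw [if_neg h1, if_neg h2]

lemma rcomp_snoc {V : Type*} (L : List (Equiv.Perm V)) (σ : Equiv.Perm V) :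
    rComp (L ++ [σ]) = σ * rComp L := by
  unfold rComp
  rw [List.foldl_append]
  rfl

lemma rcomp_gseq (m : ℕ) (g0 : ℕ → ℕ) :
    ∀ t (x : Fin m),
      gseq m g0 t
          ((rComp ((List.range t).map (fun s => rho m s (gseq m g0 s))) x : Fin m) : ℕ)
        = g0 x.val
  | 0, x => rfl
  | t + 1, x => by
    have hW := rcomp_gseq m g0 t x
    rw [List.range_succ, List.map_append, List.map_singleton, rcomp_snoc,
      Equiv.Perm.mul_apply]
    show gstep m t (gseq m g0 t) (tau m t (gseq m g0 t) _) = g0 x.val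
    unfold gstep
    rw [tau_involutive m t (gseq m g0 t)]
    exact hW

end RtCycle

/-- The routing number of the cycle graph on `m ≥ 3` vertices is at most `m`. -/
theorem rt_cycleGraph_le (m : ℕ) (hm : 3 ≤ m) : rt (SimpleGraph.cycleGraph m) ≤ m := by
  unfold rt
  apply Finset.sup_le
  intro π _
  unfold rtP
  apply Nat.sInf_le
  set g0 : ℕ → ℕ := fun j => if h : j < m then (π ⟨j, h⟩ : ℕ) else j with hg0
  have h0 : ∀ j, j < m → g0 j < m := by
    intro j hj
    simp only [hg0, dif_pos hj]
    exact (π ⟨j, hj⟩).isLt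
  have hinj : Function.Injective g0 := by
    intro a b hab
    simp only [hg0] at hab
    by_cases ha : a < m <;> by_cases hb : b < m
    · rw [dif_pos ha, dif_pos hb] at hab
      have := π.injective (Fin.ext hab)
      simpa using this
    · rw [dif_pos ha, dif_neg hb] at hab
      have := (π ⟨a, ha⟩).isLt
      omega
    · rw [dif_neg ha, dif_pos hb] at hab
      have := (π ⟨b, hb⟩).isLt
      omega
    · rw [dif_neg ha, dif_neg hb] at hab
      exact hab
  refine ⟨(List.range m).map (fun s => RtCycle.rho m s (RtCycle.gseq m g0 s)),
    by simp, ?_, ?_⟩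
  · intro σ hσ
    simp only [List.mem_map, List.mem_range] at hσ
    obtain ⟨t, -, rfl⟩ := hσ
    exact RtCycle.isRound_rho hm t _
  · apply Equiv.ext
    intro x
    have h1 := RtCycle.rcomp_gseq m g0 m x
    set W := rComp ((List.range m).map fun s => RtCycle.rho m s (RtCycle.gseq m g0 s)) with hW
    have h2 := RtCycle.gseq_id m g0 hinj h0 (W x).val (W x).isLt
    apply Fin.ext
    rw [h2] at h1
    rw [h1]
    simp only [hg0, dif_pos x.isLt, Fin.eta]
end
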